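/- Let t0 ≤ tf, let K : ℝ → Matrix (Fin 6) (Fin 3) ℝ and u : ℝ → EuclideanSpace ℝ (Fin 3) be continuous on [t0, tf], let δ = ∫_{t0}^{tf} (K s) *ᵥ (u s) ds, and suppose the matrix W = ∫_{t0}^{tf} (K s) * (K s)ᵀ ds (entrywise interval integral) is invertible. Then ∫_{t0}^{tf} (1/2)‖u s‖² ds ≥ (1/2) ⟪δ, W⁻¹ *ᵥ δ⟫. -/

import Mathlib

/-!
Completing the square, `⟪v, K u⟫ - ½‖Kᵀ v‖² ≤ ½‖u‖²` pointwise for every covector `v`.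
Integrating gives the weak-duality bound `⟪v, δ⟫ - ½ vᵀ W v ≤ J_E`, since `∫ ‖Kᵀ v‖² = vᵀ W v`.
The choice `v = W⁻¹ δ` turns `vᵀ W v` into `⟪δ, v⟫`, which leaves `½ ⟪δ, W⁻¹ δ⟫ ≤ J_E`.
-/

open scoped RealInnerProductSpace Matrix

open Set Matrix intervalIntegral WithLp

noncomputable def gramian {ι κ : Type*} [Fintype κ] (K : ℝ → Matrix ι κ ℝ) (a b : ℝ) :
    Matrix ι ι ℝ :=
  of fun i j => ∫ s in a..b, (K s * (K s)ᵀ) i j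

section

variable {ι κ : Type*} [Fintype ι] [Fintype κ]

lemma inner_toLp_mulVec (A : Matrix ι κ ℝ) (v : EuclideanSpace ℝ ι) (x : EuclideanSpace ℝ κ) :
    ⟪v, toLp 2 (A *ᵥ x)⟫ = ⟪toLp 2 (Aᵀ *ᵥ v), x⟫ := by
  simp only [EuclideanSpace.inner_eq_star_dotProduct, star_trivial]
  rw [dotProduct_mulVec, vecMul_transpose]

lemma norm_toLp_transpose_mulVec_sq (A : Matrix ι κ ℝ) (v : ι → ℝ) :
    ‖toLp 2 (Aᵀ *ᵥ v)‖ ^ 2 = v ⬝ᵥ (A * Aᵀ) *ᵥ v := by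
  rw [← real_inner_self_eq_norm_sq, EuclideanSpace.inner_toLp_toLp, star_trivial,
    ← mulVec_mulVec, dotProduct_mulVec v A, mulVec_transpose, dotProduct_comm]

lemma inner_toLp_mulVec_sub_le (A : Matrix ι κ ℝ) (v : EuclideanSpace ℝ ι)
    (x : EuclideanSpace ℝ κ) :
    ⟪v, toLp 2 (A *ᵥ x)⟫ - (1/2) * ‖toLp 2 (Aᵀ *ᵥ v)‖ ^ 2 ≤ (1/2) * ‖x‖ ^ 2 := by
  rw [inner_toLp_mulVec]
  nlinarith [real_inner_le_norm (toLp 2 (Aᵀ *ᵥ v)) x,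
    two_mul_le_add_sq ‖toLp 2 (Aᵀ *ᵥ v)‖ ‖x‖]

lemma dotProduct_mulVec_intervalIntegral {a b : ℝ} {M : ℝ → Matrix ι κ ℝ}
    (hM : ∀ i j, IntervalIntegrable (fun s => M s i j) MeasureTheory.volume a b)
    (x : ι → ℝ) (y : κ → ℝ) :
    x ⬝ᵥ (of fun i j => ∫ s in a..b, M s i j) *ᵥ y = ∫ s in a..b, x ⬝ᵥ M s *ᵥ y := by
  simp only [dotProduct, mulVec, of_apply]
  rw [integral_finsetSum fun i _ => ?_]
  · refine Finset.sum_congr rfl fun i _ => ?_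
    rw [integral_const_mul, integral_finsetSum fun j _ => (hM i j).mul_const _]
    simp only [integral_mul_const]
  · refine IntervalIntegrable.const_mul ?_ _
    simpa only [Finset.sum_fn] using
      IntervalIntegrable.sum Finset.univ fun j _ => (hM i j).mul_const (y j)

lemma dotProduct_gramian_mulVec {a b : ℝ} {K : ℝ → Matrix ι κ ℝ} (hK : ContinuousOn K (uIcc a b))
    (v : ι → ℝ) :
    v ⬝ᵥ gramian K a b *ᵥ v = ∫ s in a..b, ‖toLp 2 ((K s)ᵀ *ᵥ v)‖ ^ 2 := by
  simp only [norm_toLp_transpose_mulVec_sq]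
  exact dotProduct_mulVec_intervalIntegral
    (fun i j => ContinuousOn.intervalIntegrable (by fun_prop)) v v

lemma inner_integral_sub_half_gramian_le_energy {a b : ℝ} (hab : a ≤ b) {K : ℝ → Matrix ι κ ℝ}
    {u : ℝ → EuclideanSpace ℝ κ} (hK : ContinuousOn K (Icc a b)) (hu : ContinuousOn u (Icc a b))
    (v : EuclideanSpace ℝ ι) :
    ⟪v, ∫ s in a..b, toLp 2 (K s *ᵥ u s)⟫ - (1/2) * (v ⬝ᵥ gramian K a b *ᵥ v)
      ≤ ∫ s in a..b, (1/2) * ‖u s‖ ^ 2 := by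
  rw [← uIcc_of_le hab] at hK hu
  have hlin : ⟪v, ∫ s in a..b, toLp 2 (K s *ᵥ u s)⟫
      = ∫ s in a..b, ⟪v, toLp 2 (K s *ᵥ u s)⟫ :=
    ((innerSL ℝ v).intervalIntegral_comp_comm
      (ContinuousOn.intervalIntegrable (by fun_prop))).symm
  rw [hlin, dotProduct_gramian_mulVec hK, ← integral_const_mul,
    ← integral_sub (ContinuousOn.intervalIntegrable (by fun_prop))
      (ContinuousOn.intervalIntegrable (by fun_prop))]
  exact integral_mono_on hab (ContinuousOn.intervalIntegrable (by fun_prop))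
    (ContinuousOn.intervalIntegrable (by fun_prop))
    fun s _ => inner_toLp_mulVec_sub_le (K s) v (u s)

end

/-- Minimum-energy lower bound via the controllability Gramian: any control `u` steering the
linearized system to the deviation `δ = ∫ K(s) u(s) ds` has energy cost at least
`(1/2)⟪δ, W⁻¹ δ⟫`, where `W = ∫ K(s) K(s)ᵀ ds`. -/
theorem stmt_15 {t0 tf : ℝ} (ht : t0 ≤ tf)
    (K : ℝ → Matrix (Fin 6) (Fin 3) ℝ) (u : ℝ → EuclideanSpace ℝ (Fin 3))
    (hK : ContinuousOn K (Set.Icc t0 tf)) (hu : ContinuousOn u (Set.Icc t0 tf))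
    (δ : EuclideanSpace ℝ (Fin 6))
    (hδ : δ = ∫ s in t0..tf, (WithLp.toLp 2 (K s *ᵥ u s) : EuclideanSpace ℝ (Fin 6)))
    (W : Matrix (Fin 6) (Fin 6) ℝ)
    (hW : W = Matrix.of fun i j => ∫ s in t0..tf, (K s * (K s)ᵀ) i j)
    (hWinv : IsUnit W) :
    (1/2) * ⟪δ, (WithLp.toLp 2 (W⁻¹ *ᵥ δ) : EuclideanSpace ℝ (Fin 6))⟫
      ≤ ∫ s in t0..tf, (1/2) * ‖u s‖ ^ 2 := by
  set v : EuclideanSpace ℝ (Fin 6) := toLp 2 (W⁻¹ *ᵥ δ)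
  have hWv : W *ᵥ v = δ := by
    simp [v, mulVec_mulVec, mul_nonsing_inv _ ((isUnit_iff_isUnit_det W).1 hWinv)]
  have hquad : v ⬝ᵥ W *ᵥ v = ⟪δ, v⟫ := by
    rw [hWv, EuclideanSpace.inner_eq_star_dotProduct, star_trivial]
  have hbound := inner_integral_sub_half_gramian_le_energy ht hK hu v
  rw [← hδ, show gramian K t0 tf = W from hW.symm, hquad, real_inner_comm] at hbound
  linarith
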